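/- Let f : ℝ → ℝ be continuous with f(0)=0, F(s) = ∫_0^s f, and suppose f(t)t − q·F(t) ≥ 0 for all t and t ↦ f(t)/|t|^{q-1} strictly increasing on (0,∞) and (−∞,0), with q > 1. Then for every t ≠ 0, f(t)t − q F(t) > 0 unless f ≡ 0 on the segment between 0 and t. -/

import Mathlib

/-! Put `c = f t / |t| ^ (q - 1)`. By strict monotonicity `f s < c |s| ^ (q - 1)` strictly between
`0` and `t > 0`, so `F t < c t ^ q / q = f t * t / q`. The case `t < 0` is the reflection
`s ↦ -f (-s)` of the case `t > 0`. -/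

open intervalIntegral MeasureTheory Set

theorem mul_integral_lt_of_div_abs_rpow_lt {f : ℝ → ℝ} {q t : ℝ} (hq : 0 < q) (ht : 0 < t)
    (hfi : IntervalIntegrable f volume 0 t)
    (hlt : ∀ s ∈ Ioo 0 t, f s / |s| ^ (q - 1) < f t / |t| ^ (q - 1)) :
    q * ∫ s in 0..t, f s < f t * t := by
  set c := f t / t ^ (q - 1)
  have hlt' : ∀ s ∈ Ioo 0 t, f s < c * s ^ (q - 1) := fun s hs => by
    have := hlt s hs
    rwa [abs_of_pos hs.1, abs_of_pos ht, div_lt_iff₀ (Real.rpow_pos_of_pos hs.1 _)] at this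
  have hct : f t = c * t ^ (q - 1) := (div_mul_cancel₀ _ (Real.rpow_pos_of_pos ht _).ne').symm
  have hint : ∫ s in 0..t, c * s ^ (q - 1) = c * t ^ (q - 1) * t / q := by
    rw [intervalIntegral.integral_const_mul, integral_rpow (Or.inl (by linarith)), sub_add_cancel,
      Real.zero_rpow hq.ne', sub_zero, Real.rpow_sub_one ht.ne' q]
    field_simp
  have hcompare : ∫ s in 0..t, f s < ∫ s in 0..t, c * s ^ (q - 1) := by
    refine integral_lt_integral_of_ae_le_of_measure_setOfPred_lt_ne_zero ht.le hfi
      ((intervalIntegrable_rpow' (by linarith)).const_mul c) ?_ ?_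
    · refine ae_restrict_of_forall_mem measurableSet_Ioc fun s hs => ?_
      rcases hs.2.lt_or_eq with hst | rfl
      exacts [(hlt' s ⟨hs.1, hst⟩).le, hct.le]
    · have hsub : Ioo 0 t ⊆ {s | f s < c * s ^ (q - 1)} ∩ Ioc 0 t :=
        fun s hs => ⟨hlt' s hs, hs.1, hs.2.le⟩
      rw [Measure.restrict_apply' measurableSet_Ioc]
      exact (measure_mono hsub).trans_lt' (by simpa using ht) |>.ne'
  calc q * ∫ s in 0..t, f s < q * (c * t ^ (q - 1) * t / q) :=
        mul_lt_mul_of_pos_left (hint ▸ hcompare) hq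
    _ = f t * t := by rw [hct]; field_simp

theorem mul_integral_lt_of_div_abs_rpow_lt_of_neg {f : ℝ → ℝ} {q t : ℝ} (hq : 0 < q) (ht : t < 0)
    (hfi : IntervalIntegrable f volume 0 t)
    (hlt : ∀ s ∈ Ioo t 0, f t / |t| ^ (q - 1) < f s / |s| ^ (q - 1)) :
    q * ∫ s in 0..t, f s < f t * t := by
  have hgi : IntervalIntegrable (fun s => -f (-s)) volume 0 (-t) := by
    have h := ((IntervalIntegrable.iff_comp_neg (f := f)).1 hfi).neg
    rwa [neg_zero] at h
  have hglt : ∀ s ∈ Ioo 0 (-t), -f (-s) / |s| ^ (q - 1) < -f (-(-t)) / |-t| ^ (q - 1) := by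
    intro s hs
    have := hlt (-s) ⟨by linarith [hs.2], by linarith [hs.1]⟩
    simp only [abs_neg, neg_neg, neg_div] at this ⊢
    linarith
  have hreflect := mul_integral_lt_of_div_abs_rpow_lt hq (neg_pos.2 ht) hgi hglt
  have hF : ∫ s in 0..-t, -f (-s) = ∫ s in 0..t, f s := by
    rw [intervalIntegral.integral_neg, integral_comp_neg, neg_neg, neg_zero, integral_symm, neg_neg]
  rw [hF, neg_neg] at hreflect
  linarith

theorem stmt_12_general (f F : ℝ → ℝ) (q : ℝ)
    (hf : Continuous f) (hq : 1 < q)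
    (hF : ∀ s : ℝ, F s = ∫ τ in (0:ℝ)..s, f τ)
    (hpos : StrictMonoOn (fun t => f t / |t| ^ (q - 1)) (Set.Ioi (0:ℝ)))
    (hneg : StrictMonoOn (fun t => f t / |t| ^ (q - 1)) (Set.Iio (0:ℝ))) :
    ∀ t : ℝ, t ≠ 0 → ¬ (∀ s ∈ Set.uIcc (0:ℝ) t, f s = 0) →
      0 < f t * t - q * F t := by
  intro t ht _
  rw [hF, sub_pos]
  rcases ht.lt_or_gt with htneg | htpos
  · exact mul_integral_lt_of_div_abs_rpow_lt_of_neg (by linarith) htneg (hf.intervalIntegrable _ _)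
      fun s hs => hneg htneg hs.2 hs.1
  · exact mul_integral_lt_of_div_abs_rpow_lt (by linarith) htpos (hf.intervalIntegrable _ _)
      fun s hs => hpos hs.1 htpos hs.2

theorem stmt_12 (f F : ℝ → ℝ) (q : ℝ)
    (hf : Continuous f) (hf0 : f 0 = 0) (hq : 1 < q)
    (hF : ∀ s : ℝ, F s = ∫ τ in (0:ℝ)..s, f τ)
    (hnonneg : ∀ t : ℝ, 0 ≤ f t * t - q * F t)
    (hpos : StrictMonoOn (fun t => f t / |t| ^ (q - 1)) (Set.Ioi (0:ℝ)))
    (hneg : StrictMonoOn (fun t => f t / |t| ^ (q - 1)) (Set.Iio (0:ℝ))) :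
    ∀ t : ℝ, t ≠ 0 → ¬ (∀ s ∈ Set.uIcc (0:ℝ) t, f s = 0) →
      0 < f t * t - q * F t :=
  stmt_12_general f F q hf hq hF hpos hneg
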